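/- arXiv:2307.15075 — 3 statements merged into one kernel-verified Lean document; each statement's English description precedes it below -/
import Mathlib

section
/- In an n-Lie algebra g, for all x_1,...,x_{n-1}, y_1,...,y_n in g, the sum over i from 1 to n-1 of [y_1,...,y_{i-1},[x_1,...,x_{n-1},y_i],y_{i+1},...,y_{n-1},y_n] plus the sum over j from 1 to n-1 of [x_1,...,x_{j-1},[y_1,...,y_{n-1},x_j],x_{j+1},...,x_{n-1},y_n] equals zero. -/
open Function

section FilippovJacobi

variable {R M : Type*} [CommSemiring R] [AddCommMonoid M] [Module R M] {m : ℕ}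

def FilippovJacobi (b : MultilinearMap R (fun _ : Fin (m + 1) => M) M) : Prop :=
  ∀ (x : Fin m → M) (y : Fin (m + 1) → M),
    b (Fin.snoc x (b y)) = ∑ i, b (update y i (b (Fin.snoc x (y i))))

theorem FilippovJacobi.snoc {b : MultilinearMap R (fun _ : Fin (m + 1) => M) M}
    (hFJ : FilippovJacobi b) (x y : Fin m → M) (z : M) :
    b (Fin.snoc x (b (Fin.snoc y z))) =
      (∑ i, b (Fin.snoc (update y i (b (Fin.snoc x (y i)))) z)) +
        b (Fin.snoc y (b (Fin.snoc x z))) := by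
  rw [hFJ, Fin.sum_univ_castSucc]
  simp only [Fin.snoc_castSucc, ← Fin.snoc_update, Fin.snoc_last, Fin.update_snoc_last]

end FilippovJacobi

theorem nLie_biyao_general {K V : Type*} [Field K] [AddCommGroup V] [Module K V]
    {m : ℕ} (b : MultilinearMap K (fun _ : Fin (m + 1) => V) V)
    (hFJ : ∀ (x : Fin m → V) (y : Fin (m + 1) → V),
      b (Fin.snoc x (b y)) = ∑ i, b (Function.update y i (b (Fin.snoc x (y i)))))
    (x y : Fin m → V) (yn : V) :
    (∑ i, b (Fin.snoc (Function.update y i (b (Fin.snoc x (y i)))) yn)) +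
      (∑ j, b (Fin.snoc (Function.update x j (b (Fin.snoc y (x j)))) yn)) = 0 := by
  -- Expanding `[x, [y, yn]]` and `[y, [x, yn]]` each produces the other as the last term.
  have hxy := FilippovJacobi.snoc hFJ x y yn
  have hyx := FilippovJacobi.snoc hFJ y x yn
  linear_combination (norm := abel) -hxy - hyx

/-- In an `n`-Lie algebra (`n = m+1`) with skew-symmetric multilinear bracket `b`
satisfying the Filippov-Jacobi identity, for all `x₁,…,x_{n-1}, y₁,…,y_n`:
`Σ_{i=1}^{n-1} [y₁,…,[x₁,…,x_{n-1},y_i],…,y_{n-1},y_n]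
 + Σ_{j=1}^{n-1} [x₁,…,[y₁,…,y_{n-1},x_j],…,x_{n-1},y_n] = 0`. -/
theorem nLie_biyao {K V : Type*} [Field K] [CharZero K] [AddCommGroup V] [Module K V]
    {m : ℕ} (b : MultilinearMap K (fun _ : Fin (m + 1) => V) V)
    (halt : ∀ (v : Fin (m + 1) → V) (i j : Fin (m + 1)), i ≠ j → v i = v j → b v = 0)
    (hFJ : ∀ (x : Fin m → V) (y : Fin (m + 1) → V),
      b (Fin.snoc x (b y)) = ∑ i, b (Function.update y i (b (Fin.snoc x (y i)))))
    (x y : Fin m → V) (yn : V) :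
    (∑ i, b (Fin.snoc (Function.update y i (b (Fin.snoc x (y i)))) yn)) +
      (∑ j, b (Fin.snoc (Function.update x j (b (Fin.snoc y (x j)))) yn)) = 0 :=
  nLie_biyao_general b hFJ x y yn
end

section
/- Let (g, γ) be an n-Lie bialgebra with n-Lie bracket μ on g and dual bracket on g* given by the transpose of γ. Then the transpose of μ, ᵗμ: g* → ⊗^n g*, is a 1-cocycle on the n-Lie algebra g* with values in ⊗^n g*, i.e., ᵗμ([ξ_1,...,ξ_n]_{g*}) = Σ_{i=1}^n (−1)^{n−i} Ad^{(n)}_{ξ_1,...,ξ̂_i,...,ξ_n}(ᵗμ(ξ_i)), where Ad is the adjoint representation of g*. Consequently (g*, ᵗμ) is an n-Lie bialgebra. -/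
open scoped TensorProduct

noncomputable section

variable {K V : Type*} [Field K] [CharZero K] [AddCommGroup V] [Module K V]

/-- `ad_{x₁,…,x_{n-1}} : V → V`, `y ↦ [x₁,…,x_{n-1},y]`. -/
def adMap {m : ℕ} (b : MultilinearMap K (fun _ : Fin (m + 1) => V) V)
    (X : Fin m → V) : V →ₗ[K] V := b.curryRight X

/-- The diagonal (adjoint) action `ad^{(p)}` on `⊗^p V`. -/
def adP {m : ℕ} (b : MultilinearMap K (fun _ : Fin (m + 1) => V) V) (p : ℕ)
    (X : Fin m → V) : (⨂[K] _ : Fin p, V) →ₗ[K] (⨂[K] _ : Fin p, V) :=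
  ∑ i : Fin p, PiTensorProduct.map (Function.update (fun _ => LinearMap.id) i (adMap b X))

/-- Evaluation of a linear functional at a vector, as a linear map on the dual. -/
def evalAt (K : Type*) {V : Type*} [Field K] [AddCommGroup V] [Module K V] (v : V) :
    Module.Dual K V →ₗ[K] K where
  toFun ξ := ξ v
  map_add' _ _ := rfl
  map_smul' _ _ := rfl

/-- Pairing of `⊗ⁿ V` with an `n`-tuple of functionals:
`⟨v₁⊗…⊗vₙ, (ξ₁,…,ξₙ)⟩ = Π ξᵢ(vᵢ)`. -/
def pairV {n : ℕ} (ξ : Fin n → Module.Dual K V) : (⨂[K] _ : Fin n, V) →ₗ[K] K :=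
  PiTensorProduct.lift ((MultilinearMap.mkPiAlgebra K (Fin n) K).compLinearMap ξ)

/-- Pairing of `⊗ⁿ (Dual V)` with an `n`-tuple of vectors:
`⟨ξ₁⊗…⊗ξₙ, (x₁,…,xₙ)⟩ = Π ξᵢ(xᵢ)`. -/
def pairT {n : ℕ} (x : Fin n → V) : (⨂[K] _ : Fin n, Module.Dual K V) →ₗ[K] K :=
  PiTensorProduct.lift
    ((MultilinearMap.mkPiAlgebra K (Fin n) K).compLinearMap (fun i => evalAt K (x i)))

section Helpers

variable {K V : Type*} [Field K] [CharZero K] [AddCommGroup V] [Module K V]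

lemma pairV_tprod {n : ℕ} (ξ : Fin n → Module.Dual K V) (v : Fin n → V) :
    pairV ξ (PiTensorProduct.tprod K v) = ∏ i, ξ i (v i) := by
  simp [pairV]

lemma pairV_map {n : ℕ} (ξ : Fin n → Module.Dual K V) (F : Fin n → V →ₗ[K] V)
    (t : ⨂[K] _ : Fin n, V) :
    pairV ξ (PiTensorProduct.map F t) = pairV (fun k => (ξ k).comp (F k)) t := by
  induction t using PiTensorProduct.induction_on with
  | smul_tprod r v => simp [pairV]
  | add a b ha hb => simp only [map_add, ha, hb]

lemma pairV_adP {m p : ℕ} (g : MultilinearMap K (fun _ : Fin (m + 1) => V) V)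
    (X : Fin m → V) (ξ : Fin p → Module.Dual K V) (t : ⨂[K] _ : Fin p, V) :
    pairV ξ (adP g p X t)
      = ∑ j, pairV (Function.update ξ j ((ξ j).comp (adMap g X))) t := by
  classical
  rw [adP, LinearMap.sum_apply, map_sum]
  refine Finset.sum_congr rfl fun j _ => ?_
  rw [pairV_map]
  have hfg : (fun k => (ξ k).comp (Function.update (fun _ => LinearMap.id) j (adMap g X) k))
      = Function.update ξ j ((ξ j).comp (adMap g X)) := by
    funext k
    by_cases h : k = j
    · subst h; simp
    · simp [Function.update_of_ne h]
  rw [hfg]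

lemma pairT_eq_pairV {n : ℕ} (x : Fin n → V) (t : ⨂[K] _ : Fin n, Module.Dual K V) :
    pairT x t = pairV (fun k => evalAt K (x k)) t := rfl

/-- Moving the `j`-th slot of an alternating multilinear map to the last position. -/
lemma update_eq_sign_smul_snoc {m : ℕ} {M N : Type*} [AddCommGroup M] [Module K M]
    [AddCommGroup N] [Module K N]
    (g : MultilinearMap K (fun _ : Fin (m + 1) => M) N)
    (halt : ∀ (v : Fin (m + 1) → M) (i j : Fin (m + 1)), i ≠ j → v i = v j → g v = 0)
    (y : Fin (m + 1) → M) (j : Fin (m + 1)) (w : M) :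
    g (Function.update y j w)
      = ((-1 : K) ^ (m - (j : ℕ))) • g (Fin.snoc (y ∘ j.succAbove) w) := by
  classical
  set G : M [⋀^Fin (m + 1)]→ₗ[K] N :=
    ⟨g, fun v i j hv hij => halt v i j hij hv⟩ with hG
  set σ : Equiv.Perm (Fin (m + 1)) :=
    Fin.revPerm * ((Fin.cycleRange j.rev) * Fin.revPerm) with hσ
  have happ : ∀ k, σ k = Fin.rev (Fin.cycleRange j.rev (Fin.rev k)) := by
    intro k; simp [hσ, Equiv.Perm.mul_apply]
  have hperm : Function.update y j w
      = (Fin.snoc (y ∘ j.succAbove) w : Fin (m + 1) → M) ∘ σ := by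
    funext k
    rcases lt_trichotomy k j with hk | rfl | hk
    · have h1 : σ k = k := by
        rw [happ, Fin.cycleRange_of_gt (Fin.rev_lt_rev.mpr hk), Fin.rev_rev]
      have hkm : (k : ℕ) < m := lt_of_lt_of_le hk (Nat.lt_succ_iff.mp j.isLt)
      have hcast : Fin.castSucc (⟨(k : ℕ), hkm⟩ : Fin m) = k := by apply Fin.ext; rfl
      have hsa : j.succAbove (⟨(k : ℕ), hkm⟩ : Fin m) = k := by
        rw [Fin.succAbove_of_castSucc_lt _ _ (by rwa [hcast]), hcast]
      rw [Function.update_of_ne (ne_of_lt hk), Function.comp_apply, h1, ← hcast,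
        Fin.snoc_castSucc, Function.comp_apply, hsa, hcast]
    · have h1 : σ k = Fin.last m := by
        rw [happ, Fin.cycleRange_self, Fin.rev_zero]
      rw [Function.update_self, Function.comp_apply, h1, Fin.snoc_last]
    · have hkrev : Fin.rev k < Fin.rev j := Fin.rev_lt_rev.mpr hk
      have hval : ((Fin.rev k + 1 : Fin (m + 1)) : ℕ) = (Fin.rev k : ℕ) + 1 :=
        Fin.val_add_one_of_lt (lt_of_lt_of_le hkrev (Fin.le_last _))
      have hjk : (j : ℕ) < (k : ℕ) := hk
      have hklt : (k : ℕ) < m + 1 := k.isLt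
      have hlm : (k : ℕ) - 1 < m := by omega
      have h1 : σ k = Fin.castSucc (⟨(k : ℕ) - 1, hlm⟩ : Fin m) := by
        rw [happ, Fin.cycleRange_of_lt hkrev]
        apply Fin.ext
        rw [Fin.val_rev, hval, Fin.val_rev]
        simp only [Fin.coe_castSucc]
        omega
      have hsa : j.succAbove (⟨(k : ℕ) - 1, hlm⟩ : Fin m) = k := by
        rw [Fin.succAbove_of_le_castSucc]
        · apply Fin.ext
          simp only [Fin.val_succ]
          omega
        · rw [Fin.le_def]
          simp only [Fin.coe_castSucc]
          omega
      rw [Function.update_of_ne hk.ne', Function.comp_apply, h1,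
        Fin.snoc_castSucc, Function.comp_apply, hsa]
  have hsign : Equiv.Perm.sign σ = (-1 : ℤˣ) ^ (m - (j : ℕ)) := by
    have hrev : ((j.rev : Fin (m + 1)) : ℕ) = m - (j : ℕ) := by
      rw [Fin.val_rev]; omega
    rw [hσ, map_mul, map_mul, Fin.sign_cycleRange, hrev, mul_left_comm,
      Int.units_mul_self, mul_one]
  have : g (Function.update y j w) = G ((Fin.snoc (y ∘ j.succAbove) w) ∘ σ) := by
    rw [← hperm]; rfl
  rw [this, AlternatingMap.map_perm, hsign]
  show ((-1 : ℤˣ) ^ (m - (j : ℕ))) • g (Fin.snoc (y ∘ j.succAbove) w) = _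
  rcases Nat.even_or_odd (m - (j : ℕ)) with he | he
  · rw [he.neg_one_pow, he.neg_one_pow, one_smul, one_smul]
  · rw [he.neg_one_pow, he.neg_one_pow, neg_one_smul, Units.smul_def]
    push_cast
    rw [neg_one_smul]

/-- The pairings with tuples of vectors separate points of `⊗ⁿ (Dual V)`
when `V` is finite-dimensional. -/
lemma pairT_separating_aux {n : ℕ} {ι : Type*} [Fintype ι] [DecidableEq ι]
    (B : Module.Basis ι K V) (u : ⨂[K] _ : Fin n, Module.Dual K V)
    (hu : ∀ x : Fin n → V, pairT x u = 0) : u = 0 := by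
  classical
  have hspan : u ∈ Submodule.span K (Set.range
      (fun f : Fin n → ι => PiTensorProduct.tprod K (fun k => B.dualBasis (f k)))) := by
    have htop : Submodule.span K (Set.range
        (fun f : Fin n → ι =>
          PiTensorProduct.tprod K (fun k => B.dualBasis (f k)))) = ⊤ := by
      rw [eq_top_iff, ← PiTensorProduct.span_tprod_eq_top, Submodule.span_le]
      rintro _ ⟨ξ, rfl⟩
      have hξ : ξ = fun k => ∑ i, B.dualBasis.repr (ξ k) i • B.dualBasis i := by
        funext k; exact (B.dualBasis.sum_repr (ξ k)).symm
      rw [hξ, MultilinearMap.map_sum]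
      apply Submodule.sum_mem
      intro r _
      rw [MultilinearMap.map_smul_univ]
      exact Submodule.smul_mem _ _ (Submodule.subset_span ⟨r, rfl⟩)
    rw [htop]; exact Submodule.mem_top
  obtain ⟨coef, hc⟩ := (Submodule.mem_span_range_iff_exists_fun K).mp hspan
  have hcoef : ∀ f' : Fin n → ι, coef f' = 0 := by
    intro f'
    have h0 := hu (fun k => B (f' k))
    rw [← hc, map_sum] at h0
    have hterm : ∀ f : Fin n → ι,
        pairT (fun k => B (f' k))
            (coef f • PiTensorProduct.tprod K (fun k => B.dualBasis (f k)))
          = coef f * (if f' = f then 1 else 0) := by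
      intro f
      rw [map_smul, pairT_eq_pairV, pairV_tprod, smul_eq_mul]
      congr 1
      by_cases hf : f' = f
      · subst hf
        rw [if_pos rfl]
        refine Finset.prod_eq_one fun k _ => ?_
        show (B.dualBasis (f' k)) (B (f' k)) = 1
        rw [Module.Basis.dualBasis_apply_self, if_pos rfl]
      · obtain ⟨k, hk⟩ := Function.ne_iff.mp hf
        rw [if_neg hf]
        apply Finset.prod_eq_zero (Finset.mem_univ k)
        show (B.dualBasis (f k)) (B (f' k)) = 0
        rw [Module.Basis.dualBasis_apply_self, if_neg hk]
    rw [Finset.sum_congr rfl (fun f _ => hterm f)] at h0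
    simpa using h0
  rw [← hc]
  simp [hcoef]

/-- The pairings with tuples of vectors separate points of `⊗ⁿ (Dual V)`
when `V` is finite-dimensional. -/
lemma pairT_separating {n : ℕ} [FiniteDimensional K V]
    {t s : ⨂[K] _ : Fin n, Module.Dual K V}
    (h : ∀ x : Fin n → V, pairT x t = pairT x s) : t = s := by
  have := pairT_separating_aux (Module.finBasis K V) (t - s)
    (fun x => by rw [map_sub, h, sub_self])
  exact sub_eq_zero.mp this

end Helpers

/-- The dual of an `n`-Lie bialgebra is an `n`-Lie bialgebra: if `(g,γ)` is an
`n`-Lie bialgebra (`n = m+1`) with bracket `b = μ` on `g` and dual bracket `c = ᵗγ`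
on `g*`, then the transpose `ᵗμ` of `μ` is a `1`-cocycle on the `n`-Lie algebra `g*`
with values in `⊗ⁿ g*` with respect to the diagonal adjoint action of `g*`. -/
theorem dual_of_nLie_bialgebra_is_cocycle {m : ℕ} [FiniteDimensional K V]
    (b : MultilinearMap K (fun _ : Fin (m + 1) => V) V)
    (halt : ∀ (v : Fin (m + 1) → V) (i j : Fin (m + 1)), i ≠ j → v i = v j → b v = 0)
    (hFJ : ∀ (x : Fin m → V) (y : Fin (m + 1) → V),
      b (Fin.snoc x (b y)) = ∑ i, b (Function.update y i (b (Fin.snoc x (y i)))))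
    (c : MultilinearMap K (fun _ : Fin (m + 1) => Module.Dual K V) (Module.Dual K V))
    (caltern : ∀ (ξ : Fin (m + 1) → Module.Dual K V) (i j : Fin (m + 1)),
      i ≠ j → ξ i = ξ j → c ξ = 0)
    (cFJ : ∀ (ξ : Fin m → Module.Dual K V) (η : Fin (m + 1) → Module.Dual K V),
      c (Fin.snoc ξ (c η)) = ∑ i, c (Function.update η i (c (Fin.snoc ξ (η i)))))
    (γ : V →ₗ[K] ⨂[K] _ : Fin (m + 1), V)
    -- the bracket on `g*` is the transpose of `γ`
    (hcompat : ∀ (ξ : Fin (m + 1) → Module.Dual K V) (x : V), c ξ x = pairV ξ (γ x))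
    -- `γ` is a 1-cocycle with respect to the diagonal adjoint action `ad^{(n)}`
    (hcocycle : ∀ x : Fin (m + 1) → V,
      γ (b x) = ∑ i : Fin (m + 1), ((-1 : K) ^ (m - (i : ℕ))) •
        adP b (m + 1) (x ∘ i.succAbove) (γ (x i)))
    -- `ᵗμ` : the transpose of the bracket `b` of `g`
    (tμ : Module.Dual K V →ₗ[K] ⨂[K] _ : Fin (m + 1), Module.Dual K V)
    (htμ : ∀ (ξ : Module.Dual K V) (x : Fin (m + 1) → V), pairT x (tμ ξ) = ξ (b x)) :
    ∀ ξ : Fin (m + 1) → Module.Dual K V,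
      tμ (c ξ) = ∑ i : Fin (m + 1), ((-1 : K) ^ (m - (i : ℕ))) •
        adP c (m + 1) (ξ ∘ i.succAbove) (tμ (ξ i)) := by
  intro ξ
  classical
  apply pairT_separating
  intro x
  have hL : pairT x (tμ (c ξ))
      = ∑ i : Fin (m + 1), ∑ j : Fin (m + 1), ((-1 : K) ^ (m - (i : ℕ))) *
          (((-1 : K) ^ (m - (j : ℕ))) *
            c (Fin.snoc (ξ ∘ j.succAbove) ((ξ j).comp (adMap b (x ∘ i.succAbove)))) (x i)) := by
    rw [htμ (c ξ) x, hcompat ξ (b x), hcocycle x, map_sum]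
    refine Finset.sum_congr rfl fun i _ => ?_
    rw [map_smul, pairV_adP, smul_eq_mul, Finset.mul_sum]
    refine Finset.sum_congr rfl fun j _ => ?_
    congr 1
    rw [← hcompat (Function.update ξ j ((ξ j).comp (adMap b (x ∘ i.succAbove)))) (x i),
      update_eq_sign_smul_snoc c caltern ξ j ((ξ j).comp (adMap b (x ∘ i.succAbove))),
      LinearMap.smul_apply, smul_eq_mul]
  have hR : pairT x (∑ i : Fin (m + 1), ((-1 : K) ^ (m - (i : ℕ))) •
        adP c (m + 1) (ξ ∘ i.succAbove) (tμ (ξ i)))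
      = ∑ i : Fin (m + 1), ∑ j : Fin (m + 1), ((-1 : K) ^ (m - (i : ℕ))) *
          (((-1 : K) ^ (m - (j : ℕ))) *
            c (Fin.snoc (ξ ∘ i.succAbove) ((ξ i).comp (adMap b (x ∘ j.succAbove)))) (x j)) := by
    rw [map_sum]
    refine Finset.sum_congr rfl fun i _ => ?_
    rw [map_smul, smul_eq_mul, pairT_eq_pairV, pairV_adP, Finset.mul_sum]
    refine Finset.sum_congr rfl fun j _ => ?_
    congr 1
    set Ξ : Fin m → Module.Dual K V := ξ ∘ i.succAbove with hΞ
    set w : V := (Module.evalEquiv K V).symm ((evalAt K (x j)).comp (adMap c Ξ)) with hwdef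
    have hw : ∀ η : Module.Dual K V, η w = c (Fin.snoc Ξ η) (x j) := by
      intro η
      rw [hwdef, Module.apply_evalEquiv_symm_apply, LinearMap.comp_apply]
      show (adMap c Ξ η) (x j) = _
      rw [adMap, MultilinearMap.curryRight_apply]
    have hupd : Function.update (fun k => evalAt K (x k)) j
        ((evalAt K (x j)).comp (adMap c Ξ))
          = fun k => evalAt K (Function.update x j w k) := by
      funext k
      by_cases hkj : k = j
      · subst hkj
        rw [Function.update_self, Function.update_self]
        ext η
        rw [LinearMap.comp_apply]
        show (adMap c Ξ η) (x k) = η w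
        rw [hw η, adMap, MultilinearMap.curryRight_apply]
      · rw [Function.update_of_ne hkj, Function.update_of_ne hkj]
    rw [hupd, ← pairT_eq_pairV, htμ (ξ i) (Function.update x j w),
      update_eq_sign_smul_snoc b halt x j w, map_smul, smul_eq_mul]
    congr 1
    have hb : (ξ i) (b (Fin.snoc (x ∘ j.succAbove) w))
        = ((ξ i).comp (adMap b (x ∘ j.succAbove))) w := by
      rw [LinearMap.comp_apply, adMap, MultilinearMap.curryRight_apply]
    rw [hb, hw]
  rw [hL, hR, Finset.sum_comm]
  exact Finset.sum_congr rfl fun j _ => Finset.sum_congr rfl fun i _ => by ring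
end
end

section
/- Let g be an n-Lie algebra with n-Lie bracket on g* coming from ᵗγ. Then for all ξ_1,...,ξ_{n-1}, η_1,...,η_n ∈ g*: (n−1)[ξ_1,...,ξ_{n-1},[η_1,...,η_n]_{g*}]_{g*} = −Σ_{i=1}^n Σ_{j=1}^{n-1} (−1)^{n−i}(−1)^{n−j} [ξ_1,...,ξ̂_j,...,ξ_{n-1}, η_i, [η_1,...,η̂_i,...,η_n, ξ_j]_{g*}]_{g*}. -/
open scoped TensorProduct

noncomputable section

variable {K V : Type*} [Field K] [CharZero K] [AddCommGroup V] [Module K V]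

section Aux

/-- The permutation sending `Fin.last n ↦ i` and `i.succAbove k ↦ k.castSucc`;
it is the cycle `(i, i+1, …, last)` and has sign `(-1)^(n - i)`. -/
private def movePerm {n : ℕ} (i : Fin (n + 1)) : Equiv.Perm (Fin (n + 1)) :=
  Fin.revPerm * Fin.cycleRange i.rev * Fin.revPerm

private lemma update_eq_snoc_comp_movePerm {W : Type*} {n : ℕ}
    (η : Fin (n + 1) → W) (i : Fin (n + 1)) (x : W) :
    Function.update η i x =
      (Fin.snoc (η ∘ i.succAbove) x : Fin (n + 1) → W) ∘ (movePerm i) := by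
  funext k
  rcases eq_or_ne k i with rfl | hk
  · have h1 : (movePerm k) k = Fin.last n := by
      simp [movePerm, Equiv.Perm.mul_apply, Fin.cycleRange_self, Fin.rev_zero]
    simp [h1]
  · obtain ⟨k', rfl⟩ := Fin.exists_succAbove_eq hk
    have h1 : (movePerm i) (i.succAbove k') = k'.castSucc := by
      simp only [movePerm, Equiv.Perm.mul_apply, Fin.revPerm_apply]
      rw [Fin.rev_succAbove, Fin.cycleRange_succAbove, Fin.rev_succ, Fin.rev_rev]
    rw [Function.update_of_ne (Fin.succAbove_ne i k'), Function.comp_apply, h1,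
      Fin.snoc_castSucc, Function.comp_apply]

private lemma sign_movePerm {n : ℕ} (i : Fin (n + 1)) :
    Equiv.Perm.sign (movePerm i) = (-1) ^ (n - (i : ℕ)) := by
  have h : (Fin.revPerm : Equiv.Perm (Fin (n + 1))) * Fin.revPerm = 1 := by
    ext k; simp [Fin.rev_rev]
  have : Equiv.Perm.sign (movePerm i) = Equiv.Perm.sign (Fin.cycleRange i.rev) := by
    simp only [movePerm, map_mul]
    rw [mul_comm (Equiv.Perm.sign (Fin.revPerm : Equiv.Perm (Fin (n + 1))))
        (Equiv.Perm.sign (Fin.cycleRange i.rev)),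
      mul_assoc, ← map_mul, h, map_one, mul_one]
  rw [this, Fin.sign_cycleRange]
  congr 1
  rw [Fin.val_rev]
  omega

private lemma units_neg_one_pow_smul {M : Type*} [AddCommGroup M] (m : ℕ) (y : M) :
    ((-1 : ℤˣ) ^ m) • y = ((-1 : ℤ) ^ m) • y := by
  rw [Units.smul_def, Units.val_pow_eq_pow_val, Units.val_neg, Units.val_one]

/-- Key sign lemma: an alternating multilinear map applied to
`snoc (η ∘ i.succAbove) x` equals `(-1)^(n-1-i)` times it applied to `update η i x`. -/
private lemma snoc_succAbove_smul {K W M : Type*} [Field K]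
    [AddCommGroup W] [Module K W] [AddCommGroup M] [Module K M] {r : ℕ}
    (c : MultilinearMap K (fun _ : Fin (r + 2) => W) M)
    (caltern : ∀ (v : Fin (r + 2) → W) (i j : Fin (r + 2)), i ≠ j → v i = v j → c v = 0)
    (η : Fin (r + 2) → W) (i : Fin (r + 2)) (x : W) :
    c (Fin.snoc (η ∘ i.succAbove) x) =
      ((-1 : K) ^ (r + 1 - (i : ℕ))) • c (Function.update η i x) := by
  classical
  let f : W [⋀^Fin (r + 2)]→ₗ[K] M :=
    { toMultilinearMap := c
      map_eq_zero_of_eq' := fun v p q h hne => caltern v p q hne h }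
  have h1 : c (Function.update η i x) =
      Equiv.Perm.sign (movePerm i) • c (Fin.snoc (η ∘ i.succAbove) x) := by
    have := f.map_perm (Fin.snoc (η ∘ i.succAbove) x) (movePerm i)
    rw [← update_eq_snoc_comp_movePerm] at this
    exact this
  rw [h1, sign_movePerm, units_neg_one_pow_smul, ← Int.cast_smul_eq_zsmul K, smul_smul]
  push_cast
  rw [← pow_add, Even.neg_one_pow ⟨r + 1 - (i : ℕ), rfl⟩, one_smul]

end Aux

/-- In the `n`-Lie algebra `g*` (`n = r+2`) whose bracket `c` comes from `ᵗγ`: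
`(n−1)[ξ₁,…,ξ_{n-1},[η₁,…,ηₙ]] =
 −Σ_{i=1}^n Σ_{j=1}^{n-1} (−1)^{n−i}(−1)^{n−j}
   [ξ₁,…,ξ̂ⱼ,…,ξ_{n-1}, ηᵢ, [η₁,…,η̂ᵢ,…,ηₙ, ξⱼ]]`. -/
theorem dual_bracket_identity {r : ℕ}
    (b : MultilinearMap K (fun _ : Fin (r + 2) => V) V)
    (halt : ∀ (v : Fin (r + 2) → V) (i j : Fin (r + 2)), i ≠ j → v i = v j → b v = 0)
    (hFJ : ∀ (x : Fin (r + 1) → V) (y : Fin (r + 2) → V),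
      b (Fin.snoc x (b y)) = ∑ i, b (Function.update y i (b (Fin.snoc x (y i)))))
    (c : MultilinearMap K (fun _ : Fin (r + 2) => Module.Dual K V) (Module.Dual K V))
    (caltern : ∀ (ξ : Fin (r + 2) → Module.Dual K V) (i j : Fin (r + 2)),
      i ≠ j → ξ i = ξ j → c ξ = 0)
    (cFJ : ∀ (ξ : Fin (r + 1) → Module.Dual K V) (η : Fin (r + 2) → Module.Dual K V),
      c (Fin.snoc ξ (c η)) = ∑ i, c (Function.update η i (c (Fin.snoc ξ (η i)))))
    (γ : V →ₗ[K] ⨂[K] _ : Fin (r + 2), V)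
    (hcompat : ∀ (ξ : Fin (r + 2) → Module.Dual K V) (x : V), c ξ x = pairV ξ (γ x))
    (ξ : Fin (r + 1) → Module.Dual K V) (η : Fin (r + 2) → Module.Dual K V) :
    ((r + 1 : ℕ) : K) • c (Fin.snoc ξ (c η)) =
      -∑ i : Fin (r + 2), ∑ j : Fin (r + 1),
        (((-1 : K) ^ (r + 1 - (i : ℕ))) * ((-1 : K) ^ (r + 1 - (j : ℕ)))) •
          c (Fin.snoc (Fin.snoc (ξ ∘ j.succAbove) (η i))
              (c (Fin.snoc (η ∘ i.succAbove) (ξ j)))) := by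
  classical
  have key := snoc_succAbove_smul c caltern
  have hsq : ∀ (m : ℕ) (y : Module.Dual K V), ((-1 : K) ^ m) • ((-1 : K) ^ m) • y = y := by
    intro m y
    rw [smul_smul, ← pow_add, Even.neg_one_pow ⟨m, rfl⟩, one_smul]
  -- pull scalars out of the last slot of a snoc
  have hsmul : ∀ (s : K) (v : Module.Dual K V),
      c (Fin.snoc ξ (s • v)) = s • c (Fin.snoc ξ v) := by
    intro s v
    have h2 : (Fin.snoc ξ v : Fin (r + 2) → Module.Dual K V)
        = Function.update (Fin.snoc ξ v : Fin (r + 2) → Module.Dual K V)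
            (Fin.last (r + 1)) v := by
      rw [Fin.update_snoc_last]
    have h1 : (Fin.snoc ξ (s • v) : Fin (r + 2) → Module.Dual K V)
        = Function.update (Fin.snoc ξ v : Fin (r + 2) → Module.Dual K V)
            (Fin.last (r + 1)) (s • v) := by
      rw [Fin.update_snoc_last]
    rw [h1, c.map_update_smul, ← h2]
  -- second Filippov–Jacobi application
  have hT : ∀ i : Fin (r + 2),
      c (Fin.snoc (η ∘ i.succAbove) (c (Fin.snoc ξ (η i)))) =
        (∑ j : Fin (r + 1),
          c (Fin.snoc (Function.update ξ j (c (Fin.snoc (η ∘ i.succAbove) (ξ j)))) (η i)))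
        + ((-1 : K) ^ (r + 1 - (i : ℕ))) • c (Fin.snoc ξ (c η)) := by
    intro i
    rw [cFJ (η ∘ i.succAbove) (Fin.snoc ξ (η i)), Fin.sum_univ_castSucc]
    congr 1
    · refine Finset.sum_congr rfl fun j _ => ?_
      simp only [Fin.snoc_castSucc, ← Fin.snoc_update]
    · rw [Fin.snoc_last, Fin.update_snoc_last, key η i (η i), Function.update_eq_self, hsmul]
  -- main identity: A = S + (r+2) • A
  have hmain : c (Fin.snoc ξ (c η)) =
      (∑ i : Fin (r + 2), ∑ j : Fin (r + 1), ((-1 : K) ^ (r + 1 - (i : ℕ))) •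
        c (Fin.snoc (Function.update ξ j (c (Fin.snoc (η ∘ i.succAbove) (ξ j)))) (η i)))
      + ((r + 2 : K)) • c (Fin.snoc ξ (c η)) := by
    have hupd : ∀ i : Fin (r + 2),
        c (Function.update η i (c (Fin.snoc ξ (η i)))) =
          ((-1 : K) ^ (r + 1 - (i : ℕ))) •
            c (Fin.snoc (η ∘ i.succAbove) (c (Fin.snoc ξ (η i)))) := by
      intro i
      rw [key η i]
      exact (hsq _ _).symm
    conv_lhs => rw [cFJ ξ η]
    calc
      ∑ i, c (Function.update η i (c (Fin.snoc ξ (η i))))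
          = ∑ i : Fin (r + 2), ((∑ j : Fin (r + 1), ((-1 : K) ^ (r + 1 - (i : ℕ))) •
              c (Fin.snoc (Function.update ξ j (c (Fin.snoc (η ∘ i.succAbove) (ξ j)))) (η i)))
              + c (Fin.snoc ξ (c η))) := by
        refine Finset.sum_congr rfl fun i _ => ?_
        rw [hupd i, hT i, smul_add, Finset.smul_sum, hsq]
      _ = _ := by
        rw [Finset.sum_add_distrib, Finset.sum_const, Finset.card_univ, Fintype.card_fin,
          ← Nat.cast_smul_eq_nsmul K]
        norm_num
  -- identify the goal's summands
  have hterm : ∀ (i : Fin (r + 2)) (j : Fin (r + 1)),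
      c (Fin.snoc (Fin.snoc (ξ ∘ j.succAbove) (η i))
          (c (Fin.snoc (η ∘ i.succAbove) (ξ j)))) =
        ((-1 : K) ^ (r + 1 - (j : ℕ))) •
          c (Fin.snoc (Function.update ξ j (c (Fin.snoc (η ∘ i.succAbove) (ξ j)))) (η i)) := by
    intro i j
    have hcomp : (Fin.snoc ξ (η i) : Fin (r + 2) → _) ∘ (j.castSucc).succAbove
        = Fin.snoc (ξ ∘ j.succAbove) (η i) := by
      funext k
      refine Fin.lastCases ?_ (fun k' => ?_) k
      · rw [Function.comp_apply,
          Fin.succAbove_of_le_castSucc _ _ (Fin.castSucc_le_castSucc_iff.mpr (Fin.le_last j)),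
          Fin.succ_last, Fin.snoc_last, Fin.snoc_last]
      · rw [Function.comp_apply, Fin.castSucc_succAbove_castSucc, Fin.snoc_castSucc,
          Fin.snoc_castSucc, Function.comp_apply]
    have h := key (Fin.snoc ξ (η i)) j.castSucc (c (Fin.snoc (η ∘ i.succAbove) (ξ j)))
    rw [hcomp, ← Fin.snoc_update, Fin.coe_castSucc] at h
    exact h
  -- finish
  have hS : (∑ i : Fin (r + 2), ∑ j : Fin (r + 1), ((-1 : K) ^ (r + 1 - (i : ℕ))) •
        c (Fin.snoc (Function.update ξ j (c (Fin.snoc (η ∘ i.succAbove) (ξ j)))) (η i)))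
      = c (Fin.snoc ξ (c η)) - ((r + 2 : K)) • c (Fin.snoc ξ (c η)) :=
    eq_sub_of_add_eq hmain.symm
  have hrhs : (∑ i : Fin (r + 2), ∑ j : Fin (r + 1),
        (((-1 : K) ^ (r + 1 - (i : ℕ))) * ((-1 : K) ^ (r + 1 - (j : ℕ)))) •
          c (Fin.snoc (Fin.snoc (ξ ∘ j.succAbove) (η i))
              (c (Fin.snoc (η ∘ i.succAbove) (ξ j)))))
      = ∑ i : Fin (r + 2), ∑ j : Fin (r + 1), ((-1 : K) ^ (r + 1 - (i : ℕ))) •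
          c (Fin.snoc (Function.update ξ j (c (Fin.snoc (η ∘ i.succAbove) (ξ j)))) (η i)) := by
    refine Finset.sum_congr rfl fun i _ => Finset.sum_congr rfl fun j _ => ?_
    rw [hterm i j, smul_smul, mul_assoc, ← pow_add,
      Even.neg_one_pow ⟨r + 1 - (j : ℕ), rfl⟩, mul_one]
  rw [hrhs, hS, neg_sub]
  rw [show ((r + 2 : K)) = ((r + 1 : ℕ) : K) + 1 by push_cast; ring, add_smul, one_smul,
    add_sub_cancel_right]
end
end
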